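/- arXiv:1010.0729 — 2 statements merged into one kernel-verified Lean document; each statement's English description precedes it below -/
import Mathlib

section
/- Let B be the ball algebra on the closed unit ball of ℂ^d, and let J ⊆ B be a closed homogeneous ideal. Then the radical √J = {f ∈ B : f^n ∈ J for some n ≥ 1} is a closed subset of B (in the norm topology). -/
open MvPolynomial Metric

noncomputable section

abbrev Cd (d : ℕ) := EuclideanSpace ℂ (Fin d)

abbrev CBall (d : ℕ) : Set (Cd d) := Metric.closedBall (0 : Cd d) 1

instance (d : ℕ) : CompactSpace (CBall d) :=
  isCompact_iff_compactSpace.mp (isCompact_closedBall _ _)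

/-- The `i`-th coordinate function on the closed unit ball. -/
def coordFn (d : ℕ) (i : Fin d) : C(CBall d, ℂ) :=
  ⟨fun z => (z : Cd d) i, by exact (continuous_apply i).comp ((PiLp.continuous_ofLp _ _).comp continuous_subtype_val)⟩

/-- Restriction of a polynomial to the closed unit ball, as an element of
`C(closedBall, ℂ)`. -/
def polyMap (d : ℕ) : MvPolynomial (Fin d) ℂ →ₐ[ℂ] C(CBall d, ℂ) :=
  aeval (coordFn d)

/-- The ball algebra: the closure, in the Banach algebra of continuous functions on
the closed unit ball of ℂ^d with the supremum norm, of the restrictions of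
polynomials. -/
def ballAlg (d : ℕ) : Set C(CBall d, ℂ) := closure (Set.range (polyMap d))

/-- `J` is an ideal of the ball algebra `B`. -/
def IsIdealOfBallAlg (d : ℕ) (J : Set C(CBall d, ℂ)) : Prop :=
  J ⊆ ballAlg d ∧ (0 : C(CBall d, ℂ)) ∈ J ∧
    (∀ f ∈ J, ∀ g ∈ J, f + g ∈ J) ∧ (∀ f ∈ J, ∀ g ∈ ballAlg d, g * f ∈ J)

/-- The self-map of the closed ball given by `z ↦ t z` for `‖t‖ ≤ 1`. -/
def dilatePt (d : ℕ) (t : ℂ) (ht : ‖t‖ ≤ 1) : C(CBall d, CBall d) :=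
  ⟨fun z => ⟨t • (z : Cd d), by
      have hz : ‖(z : Cd d)‖ ≤ 1 := mem_closedBall_zero_iff.mp z.2
      show t • (z : Cd d) ∈ Metric.closedBall 0 1
      rw [mem_closedBall_zero_iff, norm_smul]
      exact mul_le_one₀ ht (norm_nonneg _) hz⟩,
    by exact Continuous.subtype_mk (continuous_subtype_val.const_smul t) _⟩

/-- The dilation `f ↦ (z ↦ f (t z))` on continuous functions on the closed ball. -/
def dilateFn (d : ℕ) (t : ℂ) (ht : ‖t‖ ≤ 1) (f : C(CBall d, ℂ)) : C(CBall d, ℂ) :=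
  f.comp (dilatePt d t ht)

/-- A closed ideal of the ball algebra is homogeneous if it is invariant under all
dilations `z ↦ t z`, `|t| < 1`. -/
def IsHomogBallIdeal (d : ℕ) (J : Set C(CBall d, ℂ)) : Prop :=
  ∀ f ∈ J, ∀ t : ℂ, ∀ ht : ‖t‖ < 1, dilateFn d t ht.le f ∈ J

/-!
Averaging `θ ↦ e^{-ikθ} f(e^{iθ} ·)` over the circle gives a contraction
`Φ_k = homogeneousPart d k` of `C(CBall d, ℂ)` which sends a polynomial to its homogeneous
component of degree `k`; on the ball algebra `B`, Abel summation `f(t ·) = ∑ tᵏ Φ_k f`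
(`‖t‖ < 1`) and `t → 1` recover `f` from its components. Hence a closed homogeneous ideal `J`
contains `Φ_k f` for `f ∈ J`, and contains every `f ∈ B` all of whose components lie in `J`.

Let `I` be the ideal of polynomials whose restriction lies in `J`. By induction on `k`, every
component of an `f ∈ √J` is a polynomial in `√I`: subtracting the components of degree `< k`
leaves `g ∈ √J` whose lowest component is `Φ_k f`, and `(Φ_k f)ⁿ = Φ_{kn}(gⁿ) ∈ J`.
Since the polynomial ring is Noetherian, `(√I)^N ⊆ I` for some `N`, so the components of
`f^N` lie in `I` and `f^N ∈ J`. Thus `√J = B ∩ {f | f^N ∈ J}`, which is closed.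
-/

namespace MvPolynomial

open Finset.HasAntidiagonal

variable {σ R : Type*} [CommSemiring R]

theorem IsHomogeneous.aeval_smul {A : Type*} [CommSemiring A] [Algebra R A]
    {q : MvPolynomial σ R} {j : ℕ} (hq : q.IsHomogeneous j) (t : R) (x : σ → A) :
    MvPolynomial.aeval (t • x) q = t ^ j • MvPolynomial.aeval x q := by
  conv_lhs => rw [q.as_sum]
  conv_rhs => rw [q.as_sum]
  simp only [map_sum, Finset.smul_sum, aeval_monomial]
  refine Finset.sum_congr rfl fun μ hμ => ?_
  have hdeg : ∑ i ∈ μ.support, μ i = j := by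
    simpa [Finsupp.degree, Finsupp.weight_apply, Finsupp.sum] using hq (mem_support_iff.mp hμ)
  simp only [Finsupp.prod, Pi.smul_apply, smul_pow]
  rw [Finset.prod_smul, Finset.prod_pow_eq_pow_sum, hdeg, mul_smul_comm]

theorem homogeneousComponent_mul (k : ℕ) (p q : MvPolynomial σ R) :
    homogeneousComponent k (p * q) = ∑ x ∈ antidiagonal k,
      homogeneousComponent x.1 p * homogeneousComponent x.2 q := by
  let := gradedAlgebra (σ := σ) (R := R)
  simp only [← decomposition.decompose'_apply, DirectSum.Decomposition.decompose'_eq]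
  rw [DirectSum.decompose_mul, DirectSum.coe_mul_apply_eq_sum_antidiagonal]

end MvPolynomial

open MeasureTheory in
theorem Submodule.setIntegral_mem {α E : Type*} [MeasurableSpace α] {μ : Measure α}
    [NormedAddCommGroup E] [NormedSpace ℝ E] [CompleteSpace E] (S : Submodule ℝ E)
    (hS : IsClosed (S : Set E)) {s : Set α} (hs : μ s ≠ ⊤) {f : α → E} (hf : ∀ x, f x ∈ S) :
    ∫ x in s, f x ∂μ ∈ S := by
  by_cases hfi : IntegrableOn f s μ
  · by_cases hs0 : μ s = 0
    · simp [Measure.restrict_eq_zero.mpr hs0, S.zero_mem]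
    · have havg := S.convex.set_average_mem hS hs0 hs (ae_of_all _ hf) hfi
      rw [setAverage_eq] at havg
      have hreal : μ.real s ≠ 0 := (ENNReal.toReal_ne_zero).mpr ⟨hs0, hs⟩
      simpa [smul_inv_smul₀ hreal] using S.smul_mem (μ.real s) havg
  · rw [integral_undef hfi]
    exact S.zero_mem

theorem Submodule.intervalIntegral_mem {E : Type*}
    [NormedAddCommGroup E] [NormedSpace ℝ E] [CompleteSpace E] (S : Submodule ℝ E)
    (hS : IsClosed (S : Set E)) {a b : ℝ} {f : ℝ → E} (hf : ∀ x, f x ∈ S) :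
    ∫ x in a..b, f x ∈ S :=
  S.sub_mem (S.setIntegral_mem hS measure_Ioc_lt_top.ne hf)
    (S.setIntegral_mem hS measure_Ioc_lt_top.ne hf)

namespace BallAlgebra

open Complex Real MvPolynomial Finset.HasAntidiagonal

variable {d : ℕ}

-- Definitionally `dilateFn d t ht`.
abbrev dilation (d : ℕ) (t : ℂ) (ht : ‖t‖ ≤ 1) : C(CBall d, ℂ) →ₐ[ℂ] C(CBall d, ℂ) :=
  ContinuousMap.compRightAlgHom ℂ ℂ (dilatePt d t ht)

theorem norm_dilation_le (t : ℂ) (ht : ‖t‖ ≤ 1) (f : C(CBall d, ℂ)) :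
    ‖dilation d t ht f‖ ≤ ‖f‖ :=
  (ContinuousMap.norm_le _ (norm_nonneg f)).2 fun _ => f.norm_coe_le_norm _

theorem dilation_one (f : C(CBall d, ℂ)) : dilation d 1 (by simp) f = f := by
  ext z
  simp [dilatePt]

theorem dilation_dilation (s t : ℂ) (hs : ‖s‖ ≤ 1) (ht : ‖t‖ ≤ 1) (f : C(CBall d, ℂ)) :
    dilation d s hs (dilation d t ht f) =
      dilation d (t * s) (by rw [norm_mul]; exact mul_le_one₀ ht (norm_nonneg s) hs) f := by
  ext z
  simp [dilatePt, mul_smul]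

theorem continuous_dilation_param (f : C(CBall d, ℂ)) :
    Continuous fun t : Metric.closedBall (0 : ℂ) 1 =>
      dilation d t (mem_closedBall_zero_iff.mp t.2) f := by
  let F : C(Metric.closedBall (0 : ℂ) 1 × CBall d, ℂ) :=
    ⟨fun p => dilation d p.1 (mem_closedBall_zero_iff.mp p.1.2) f p.2,
      f.continuous.comp <| Continuous.subtype_mk
        ((continuous_subtype_val.comp continuous_fst).smul
          (continuous_subtype_val.comp continuous_snd)) _⟩
  exact F.curry.continuous

theorem dilation_polyMap_of_isHomogeneous (t : ℂ) (ht : ‖t‖ ≤ 1)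
    {q : MvPolynomial (Fin d) ℂ} {j : ℕ} (hq : q.IsHomogeneous j) :
    dilation d t ht (polyMap d q) = t ^ j • polyMap d q := by
  rw [polyMap, ← hq.aeval_smul, ← AlgHom.comp_apply, comp_aeval]
  rfl

theorem mem_of_forall_dilation_mem {S : Set C(CBall d, ℂ)} (hS : IsClosed S)
    {f : C(CBall d, ℂ)} (h : ∀ t : ℂ, ∀ ht : ‖t‖ < 1, dilation d t ht.le f ∈ S) : f ∈ S := by
  have hr : ∀ n : ℕ, ‖((n : ℂ) / (n + 1))‖ < 1 := fun n => by
    rw [norm_div]; norm_cast; rw [div_lt_one (by positivity)]; simp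
  have hlim : Filter.Tendsto (fun n : ℕ => (⟨(n : ℂ) / (n + 1), by simpa using (hr n).le⟩ :
      Metric.closedBall (0 : ℂ) 1)) Filter.atTop (nhds ⟨1, by simp⟩) :=
    tendsto_subtype_rng.2 (tendsto_natCast_div_add_atTop (1 : ℂ))
  have := ((continuous_dilation_param f).tendsto _).comp hlim
  rw [dilation_one] at this
  exact hS.mem_of_tendsto this (Filter.Eventually.of_forall fun n => h _ (hr n))

theorem dilation_polyMap (t : ℂ) (ht : ‖t‖ ≤ 1) (p : MvPolynomial (Fin d) ℂ) :
    dilation d t ht (polyMap d p) =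
      ∑ j ∈ Finset.range (p.totalDegree + 1), t ^ j • polyMap d (homogeneousComponent j p) := by
  conv_lhs => rw [← p.sum_homogeneousComponent]
  simp only [map_sum,
    dilation_polyMap_of_isHomogeneous _ _ (homogeneousComponent_isHomogeneous _ p)]

theorem integral_exp_mul_I_pow (j k : ℕ) :
    ∫ θ in (0 : ℝ)..2 * π, exp (-(k * θ) * I) * exp (θ * I) ^ j =
      if j = k then 2 * π else 0 := by
  have hexp : ∀ θ : ℝ, exp (-(k * θ) * I) * exp (θ * I) ^ j = exp (((j - k) * I) * θ) := by
    intro θ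
    rw [← Complex.exp_nat_mul, ← Complex.exp_add]
    ring_nf
  simp only [hexp]
  split_ifs with hjk
  · simp [hjk]
  · have hc : ((j : ℂ) - k) * I ≠ 0 :=
      mul_ne_zero (sub_ne_zero.2 (Nat.cast_injective.ne hjk)) I_ne_zero
    have hper : ((j : ℂ) - k) * I * ↑(2 * π) = ((j - k : ℤ) : ℂ) * (2 * π * I) := by
      push_cast; ring
    rw [integral_exp_mul_complex hc, hper, exp_int_mul_two_pi_mul_I]
    simp

def componentIntegrand (d k : ℕ) (f : C(CBall d, ℂ)) (θ : ℝ) : C(CBall d, ℂ) :=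
  exp (-(k * θ) * I) • dilation d (exp (θ * I)) (norm_exp_ofReal_mul_I θ).le f

theorem continuous_componentIntegrand (k : ℕ) (f : C(CBall d, ℂ)) :
    Continuous (componentIntegrand d k f) := by
  have hrot : Continuous fun θ : ℝ =>
      (⟨exp (θ * I), by simp⟩ : Metric.closedBall (0 : ℂ) 1) :=
    Continuous.subtype_mk (by fun_prop) _
  exact (show Continuous fun θ : ℝ => exp (-(k * θ) * I) by fun_prop).smul
    ((continuous_dilation_param f).comp hrot)

theorem intervalIntegrable_componentIntegrand (k : ℕ) (f : C(CBall d, ℂ)) (a b : ℝ) :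
    IntervalIntegrable (componentIntegrand d k f) MeasureTheory.volume a b :=
  (continuous_componentIntegrand k f).intervalIntegrable a b

theorem norm_componentIntegrand_le (k : ℕ) (f : C(CBall d, ℂ)) (θ : ℝ) :
    ‖componentIntegrand d k f θ‖ ≤ ‖f‖ := by
  rw [componentIntegrand, norm_smul, Complex.norm_exp]
  simpa using norm_dilation_le _ _ f

def homogeneousPart (d k : ℕ) : C(CBall d, ℂ) →L[ℂ] C(CBall d, ℂ) :=
  LinearMap.mkContinuous
    { toFun := fun f => (2 * π)⁻¹ • ∫ θ in (0 : ℝ)..2 * π, componentIntegrand d k f θ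
      map_add' := fun f g => by
        rw [← smul_add, ← intervalIntegral.integral_add
          (intervalIntegrable_componentIntegrand k f _ _)
          (intervalIntegrable_componentIntegrand k g _ _)]
        simp only [componentIntegrand, map_add, smul_add]
      map_smul' := fun c f => by
        simp only [componentIntegrand, map_smul, smul_comm _ c]
        rw [intervalIntegral.integral_smul, smul_comm, RingHom.id_apply] }
    1 fun f => by
      have h := intervalIntegral.norm_integral_le_of_norm_le_const
        (a := 0) (b := 2 * π) fun θ _ => norm_componentIntegrand_le k f θ
      rw [sub_zero, abs_of_pos two_pi_pos] at h
      calc ‖(2 * π)⁻¹ • ∫ θ in (0 : ℝ)..2 * π, componentIntegrand d k f θ‖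
          ≤ (2 * π)⁻¹ * (‖f‖ * (2 * π)) := by
            rw [norm_smul, norm_inv, Real.norm_of_nonneg two_pi_pos.le]; gcongr
        _ = 1 * ‖f‖ := by field_simp

theorem homogeneousPart_apply (k : ℕ) (f : C(CBall d, ℂ)) :
    homogeneousPart d k f = (2 * π)⁻¹ • ∫ θ in (0 : ℝ)..2 * π, componentIntegrand d k f θ :=
  rfl

theorem norm_homogeneousPart_le (k : ℕ) : ‖homogeneousPart d k‖ ≤ 1 :=
  LinearMap.mkContinuous_norm_le _ zero_le_one _

theorem homogeneousPart_polyMap_of_isHomogeneous (k : ℕ) {q : MvPolynomial (Fin d) ℂ} {j : ℕ}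
    (hq : q.IsHomogeneous j) :
    homogeneousPart d k (polyMap d q) = if j = k then polyMap d q else 0 := by
  have h : ∀ θ : ℝ, componentIntegrand d k (polyMap d q) θ =
      (exp (-(k * θ) * I) * exp (θ * I) ^ j) • polyMap d q := fun θ => by
    rw [componentIntegrand, dilation_polyMap_of_isHomogeneous _ _ hq, smul_smul]
  simp only [homogeneousPart_apply, h, intervalIntegral.integral_smul_const,
    integral_exp_mul_I_pow]
  split_ifs
  · rw [← Complex.coe_smul, smul_smul]
    push_cast
    rw [inv_mul_cancel₀ (mul_ne_zero two_ne_zero (ofReal_ne_zero.2 pi_ne_zero)), one_smul]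
  · simp

theorem homogeneousPart_polyMap (k : ℕ) (p : MvPolynomial (Fin d) ℂ) :
    homogeneousPart d k (polyMap d p) = polyMap d (homogeneousComponent k p) := by
  conv_lhs => rw [← p.sum_homogeneousComponent]
  simp only [map_sum, homogeneousPart_polyMap_of_isHomogeneous k
    (homogeneousComponent_isHomogeneous _ p), Finset.sum_ite_eq', Finset.mem_range]
  split_ifs with hk
  · rfl
  · rw [homogeneousComponent_eq_zero _ _ (by omega), map_zero]

theorem homogeneousPart_mem {S : Submodule ℂ C(CBall d, ℂ)}
    (hS : IsClosed (S : Set C(CBall d, ℂ))) (hdil : IsHomogBallIdeal d S) (k : ℕ)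
    {f : C(CBall d, ℂ)} (hf : f ∈ S) :
    homogeneousPart d k f ∈ S := by
  -- `Φ_k (f(t ·))` averages the dilates `f(t e^{iθ} ·)`, which lie in `S` as `‖t‖ < 1`.
  refine mem_of_forall_dilation_mem (hS.preimage (homogeneousPart d k).continuous) fun t ht => ?_
  rw [Set.mem_preimage, homogeneousPart_apply]
  refine S.smul_of_tower_mem _ ((S.restrictScalars ℝ).intervalIntegral_mem hS fun θ => ?_)
  rw [componentIntegrand, dilation_dilation]
  exact S.smul_mem _ (hdil f hf _ (by simpa using ht))

theorem polyMap_mem_ballAlg (p : MvPolynomial (Fin d) ℂ) : polyMap d p ∈ ballAlg d :=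
  subset_closure ⟨p, rfl⟩

def ballSubalgebra (d : ℕ) : Subalgebra ℂ C(CBall d, ℂ) :=
  (polyMap d).range.topologicalClosure

def polyToBall (d : ℕ) : MvPolynomial (Fin d) ℂ →ₐ[ℂ] ballSubalgebra d :=
  (polyMap d).codRestrict _ polyMap_mem_ballAlg

theorem coe_polyToBall (p : MvPolynomial (Fin d) ℂ) :
    (polyToBall d p : C(CBall d, ℂ)) = polyMap d p :=
  rfl

theorem eqOn_ballAlg {X : Type*} [TopologicalSpace X] [T2Space X] {F G : C(CBall d, ℂ) → X}
    (hF : Continuous F) (hG : Continuous G) (h : ∀ p, F (polyMap d p) = G (polyMap d p)) :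
    Set.EqOn F G (ballAlg d) :=
  Set.EqOn.closure (Set.forall_mem_range.2 h) hF hG

theorem homogeneousPart_mem_range (k : ℕ) {f : C(CBall d, ℂ)} (hf : f ∈ ballAlg d) :
    homogeneousPart d k f ∈ Set.range (polyMap d) := by
  let V := (homogeneousSubmodule (Fin d) ℂ k).map (polyMap d).toLinearMap
  have : FiniteDimensional ℂ V :=
    have := Module.Finite.iff_fg.2 (homogeneousSubmodule_fg (σ := Fin d) (R := ℂ) k)
    Module.Finite.map _ _
  have hmaps : Set.MapsTo (homogeneousPart d k) (Set.range (polyMap d)) V := by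
    rintro _ ⟨p, rfl⟩
    rw [homogeneousPart_polyMap]
    exact ⟨_, homogeneousComponent_mem k p, rfl⟩
  obtain ⟨q, -, hq⟩ := V.closed_of_finiteDimensional.closure_subset
    (map_mem_closure (homogeneousPart d k).continuous hf hmaps)
  exact ⟨q, hq⟩

theorem homogeneousPart_homogeneousPart (i j : ℕ) {f : C(CBall d, ℂ)} (hf : f ∈ ballAlg d) :
    homogeneousPart d i (homogeneousPart d j f) = if j = i then homogeneousPart d j f else 0 := by
  refine eqOn_ballAlg (F := fun f => homogeneousPart d i (homogeneousPart d j f))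
    (G := fun f => if j = i then homogeneousPart d j f else 0)
    (by fun_prop) ?_ (fun p => ?_) hf
  · split_ifs <;> fun_prop
  · rw [homogeneousPart_polyMap j, homogeneousPart_polyMap_of_isHomogeneous i
      (homogeneousComponent_isHomogeneous j p)]

theorem homogeneousPart_mul (k : ℕ) {f g : C(CBall d, ℂ)} (hf : f ∈ ballAlg d)
    (hg : g ∈ ballAlg d) : homogeneousPart d k (f * g) =
      ∑ x ∈ antidiagonal k, homogeneousPart d x.1 f * homogeneousPart d x.2 g := by
  have hpoly : ∀ p, ∀ g ∈ ballAlg d, homogeneousPart d k (polyMap d p * g) =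
      ∑ x ∈ antidiagonal k, homogeneousPart d x.1 (polyMap d p) * homogeneousPart d x.2 g := by
    refine fun p => eqOn_ballAlg (by fun_prop) (by fun_prop) fun q => ?_
    simp only [← map_mul, homogeneousPart_polyMap, homogeneousComponent_mul, map_sum]
  exact eqOn_ballAlg (F := fun f => homogeneousPart d k (f * g))
    (G := fun f => ∑ x ∈ antidiagonal k, homogeneousPart d x.1 f * homogeneousPart d x.2 g)
    (by fun_prop) (by fun_prop) (fun p => hpoly p g hg) hf

theorem hasSum_homogeneousPart {f : C(CBall d, ℂ)} (hf : f ∈ ballAlg d) {t : ℂ} (ht : ‖t‖ < 1) :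
    HasSum (fun j => t ^ j • homogeneousPart d j f) (dilation d t ht.le f) := by
  -- The series converges in operator norm, so its sum is continuous in `f`.
  have hsum : Summable fun j => t ^ j • homogeneousPart d j :=
    .of_norm_bounded (summable_geometric_of_lt_one (norm_nonneg t) ht) fun j => by
      rw [norm_smul, norm_pow]
      exact mul_le_of_le_one_right (by positivity) (norm_homogeneousPart_le j)
  have happly : ∀ f, HasSum (fun j => t ^ j • homogeneousPart d j f)
      ((∑' j, t ^ j • homogeneousPart d j) f) :=
    fun f => hsum.hasSum.mapL (ContinuousLinearMap.apply ℂ _ f)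
  suffices (∑' j, t ^ j • homogeneousPart d j) f = dilation d t ht.le f from this ▸ happly f
  refine eqOn_ballAlg (ContinuousLinearMap.continuous _)
    (ContinuousMap.compRightAlgHom_continuous ℂ ℂ _) (fun p => ?_) hf
  refine (happly _).unique ?_
  rw [dilation_polyMap]
  simp only [homogeneousPart_polyMap]
  refine hasSum_sum_of_ne_finset_zero fun j hj => ?_
  rw [homogeneousComponent_eq_zero _ _ (by simpa using hj), map_zero, smul_zero]

theorem mem_of_forall_homogeneousPart_mem {S : Submodule ℂ C(CBall d, ℂ)}
    (hS : IsClosed (S : Set C(CBall d, ℂ))) {f : C(CBall d, ℂ)} (hf : f ∈ ballAlg d)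
    (h : ∀ k, homogeneousPart d k f ∈ S) : f ∈ S :=
  mem_of_forall_dilation_mem hS fun _ ht => hS.mem_of_tendsto (hasSum_homogeneousPart hf ht)
    (.of_forall fun _ => S.sum_mem fun k _ => S.smul_mem _ (h k))

def HasComponentsIn (K : Ideal (MvPolynomial (Fin d) ℂ)) (f : C(CBall d, ℂ)) : Prop :=
  ∀ k, homogeneousPart d k f ∈ polyMap d '' K

theorem HasComponentsIn.mul {K L : Ideal (MvPolynomial (Fin d) ℂ)} {f g : C(CBall d, ℂ)}
    (hf : HasComponentsIn K f) (hg : HasComponentsIn L g) (hfB : f ∈ ballAlg d)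
    (hgB : g ∈ ballAlg d) : HasComponentsIn (K * L) (f * g) := by
  choose a ha hfa using hf
  choose b hb hgb using hg
  intro k
  refine ⟨∑ x ∈ antidiagonal k, a x.1 * b x.2,
    Ideal.sum_mem _ fun x _ => Ideal.mul_mem_mul (ha _) (hb _), ?_⟩
  simp only [homogeneousPart_mul k hfB hgB, map_sum, map_mul, hfa, hgb]

theorem HasComponentsIn.pow {K : Ideal (MvPolynomial (Fin d) ℂ)} {f : C(CBall d, ℂ)}
    (hf : HasComponentsIn K f) (hfB : f ∈ ballAlg d) (m : ℕ) :
    HasComponentsIn (K ^ m) (f ^ m) := by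
  induction m with
  | zero =>
    intro k
    rw [pow_zero, pow_zero, ← map_one (polyMap d), homogeneousPart_polyMap]
    exact ⟨_, by simp, rfl⟩
  | succ m ih =>
    rw [pow_succ, pow_succ]
    exact ih.mul hf (pow_mem (S := ballSubalgebra d) hfB m) hfB

theorem homogeneousPart_mul_of_forall_lt {f g : C(CBall d, ℂ)} (hf : f ∈ ballAlg d)
    (hg : g ∈ ballAlg d) {a b : ℕ} (hfa : ∀ i < a, homogeneousPart d i f = 0)
    (hgb : ∀ j < b, homogeneousPart d j g = 0) :
    (∀ n < a + b, homogeneousPart d n (f * g) = 0) ∧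
      homogeneousPart d (a + b) (f * g) = homogeneousPart d a f * homogeneousPart d b g := by
  have hvan : ∀ x : ℕ × ℕ, x.1 < a ∨ x.2 < b →
      homogeneousPart d x.1 f * homogeneousPart d x.2 g = 0 := by
    rintro x (h | h)
    · rw [hfa _ h, zero_mul]
    · rw [hgb _ h, mul_zero]
  refine ⟨fun n hn => ?_, ?_⟩
  · rw [homogeneousPart_mul n hf hg]
    exact Finset.sum_eq_zero fun x hx => hvan x (by rw [mem_antidiagonal] at hx; omega)
  · rw [homogeneousPart_mul _ hf hg, Finset.sum_eq_single_of_mem (a, b) (by simp)]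
    intro x hx hne
    rw [mem_antidiagonal] at hx
    exact hvan x (by by_contra! h; exact hne (Prod.ext (by omega) (by omega)))

theorem homogeneousPart_pow_of_forall_lt {f : C(CBall d, ℂ)} (hf : f ∈ ballAlg d) {k : ℕ}
    (hfk : ∀ i < k, homogeneousPart d i f = 0) (m : ℕ) :
    (∀ n < k * m, homogeneousPart d n (f ^ m) = 0) ∧
      homogeneousPart d (k * m) (f ^ m) = homogeneousPart d k f ^ m := by
  induction m with
  | zero =>
    refine ⟨fun n hn => absurd hn (by omega), ?_⟩
    rw [mul_zero, pow_zero, pow_zero, ← map_one (polyMap d), homogeneousPart_polyMap,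
      homogeneousComponent_zero, coeff_zero_one, C_1]
  | succ m ih =>
    obtain ⟨hlow, hlead⟩ :=
      homogeneousPart_mul_of_forall_lt (pow_mem (S := ballSubalgebra d) hf m) hf ih.1 hfk
    rw [pow_succ, mul_add_one]
    exact ⟨hlow, by rw [hlead, ih.2, pow_succ]⟩

theorem homogeneousPart_sub_sum {f : C(CBall d, ℂ)} (hf : f ∈ ballAlg d) (k i : ℕ) :
    homogeneousPart d i (f - ∑ j ∈ Finset.range k, homogeneousPart d j f) =
      if k ≤ i then homogeneousPart d i f else 0 := by
  simp only [map_sub, map_sum, homogeneousPart_homogeneousPart _ _ hf, Finset.sum_ite_eq',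
    Finset.mem_range]
  split_ifs <;> first | omega | simp

variable {J : Set C(CBall d, ℂ)}

def _root_.IsIdealOfBallAlg.toSubmodule (hJ : IsIdealOfBallAlg d J) :
    Submodule ℂ C(CBall d, ℂ) where
  carrier := J
  add_mem' hf hg := hJ.2.2.1 _ hf _ hg
  zero_mem' := hJ.2.1
  smul_mem' c f hf := by
    rw [Algebra.smul_def, ← (polyMap d).commutes]
    exact hJ.2.2.2 f hf _ (polyMap_mem_ballAlg _)

def _root_.IsIdealOfBallAlg.toIdeal (hJ : IsIdealOfBallAlg d J) : Ideal (ballSubalgebra d) where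
  carrier := {x | (x : C(CBall d, ℂ)) ∈ J}
  add_mem' hx hy := hJ.2.2.1 _ hx _ hy
  zero_mem' := hJ.2.1
  smul_mem' c _ hx := hJ.2.2.2 _ hx _ c.2

def _root_.IsIdealOfBallAlg.polyIdeal (hJ : IsIdealOfBallAlg d J) :
    Ideal (MvPolynomial (Fin d) ℂ) :=
  hJ.toIdeal.comap (polyToBall d)

theorem hasComponentsIn_radical (hJ : IsIdealOfBallAlg d J) (hJcl : IsClosed J)
    (hJhom : IsHomogBallIdeal d J) {x : ballSubalgebra d} (hx : x ∈ hJ.toIdeal.radical) :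
    HasComponentsIn hJ.polyIdeal.radical x := by
  intro k
  induction k using Nat.strong_induction_on with
  | _ k ih =>
    choose! q hq hqx using ih
    have hP : polyToBall d (∑ j ∈ Finset.range k, q j) ∈ hJ.toIdeal.radical := by
      rw [← Ideal.mem_comap, Ideal.comap_radical]
      exact Ideal.sum_mem _ fun j hj => hq j (Finset.mem_range.1 hj)
    obtain ⟨n, hn⟩ := hJ.toIdeal.radical.sub_mem hx hP
    set g := (x : C(CBall d, ℂ)) - ∑ j ∈ Finset.range k, homogeneousPart d j x
    have hg : ((x - polyToBall d (∑ j ∈ Finset.range k, q j) : ballSubalgebra d) :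
        C(CBall d, ℂ)) = g := by
      rw [Subalgebra.coe_sub, coe_polyToBall, map_sum]
      exact congrArg _ (Finset.sum_congr rfl fun j hj => hqx j (Finset.mem_range.1 hj))
    have hgB : g ∈ ballAlg d := hg ▸ (x - polyToBall d _).2
    have hgJ : g ^ n ∈ J := by
      have : ((_ ^ n : ballSubalgebra d) : C(CBall d, ℂ)) ∈ J := hn
      rwa [SubmonoidClass.coe_pow, hg] at this
    have hlow : ∀ i < k, homogeneousPart d i g = 0 := fun i hi => by
      rw [homogeneousPart_sub_sum x.2, if_neg (by omega)]
    have hlead : homogeneousPart d k g = homogeneousPart d k x := by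
      rw [homogeneousPart_sub_sum x.2, if_pos le_rfl]
    have hmem : homogeneousPart d k x ^ n ∈ J := by
      rw [← hlead, ← (homogeneousPart_pow_of_forall_lt hgB hlow n).2]
      exact homogeneousPart_mem (S := hJ.toSubmodule) hJcl hJhom _ hgJ
    obtain ⟨r, hr⟩ := homogeneousPart_mem_range k x.2
    refine ⟨r, ⟨n, ?_⟩, hr⟩
    show polyMap d (r ^ n) ∈ J
    rwa [map_pow, hr]

theorem pow_mem_of_mem_radical (hJ : IsIdealOfBallAlg d J) (hJcl : IsClosed J)
    (hJhom : IsHomogBallIdeal d J) {N : ℕ} (hN : hJ.polyIdeal.radical ^ N ≤ hJ.polyIdeal)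
    {x : ballSubalgebra d} (hx : x ∈ hJ.toIdeal.radical) : x ^ N ∈ hJ.toIdeal := by
  refine mem_of_forall_homogeneousPart_mem (S := hJ.toSubmodule) hJcl (x ^ N).2 fun k => ?_
  obtain ⟨q, hq, hqx⟩ := (hasComponentsIn_radical hJ hJcl hJhom hx).pow x.2 N k
  rw [SubmonoidClass.coe_pow, ← hqx]
  exact hN hq

end BallAlgebra

/-- The radical `√J = {f ∈ B : f^n ∈ J for some n ≥ 1}` of a
closed homogeneous ideal `J` of the ball algebra is closed in the norm topology. -/
theorem stmt12 (d : ℕ) (J : Set C(CBall d, ℂ))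
    (hJ : IsIdealOfBallAlg d J) (hJcl : IsClosed J) (hJhom : IsHomogBallIdeal d J) :
    IsClosed {f : C(CBall d, ℂ) | f ∈ ballAlg d ∧ ∃ n : ℕ, 1 ≤ n ∧ f ^ n ∈ J} := by
  obtain ⟨n, hn⟩ := Ideal.exists_radical_pow_le_of_fg hJ.polyIdeal (IsNoetherian.noetherian _)
  have hN : hJ.polyIdeal.radical ^ (n + 1) ≤ hJ.polyIdeal :=
    (Ideal.pow_le_pow_right n.le_succ).trans hn
  have hset : {f : C(CBall d, ℂ) | f ∈ ballAlg d ∧ ∃ n : ℕ, 1 ≤ n ∧ f ^ n ∈ J} =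
      ballAlg d ∩ (· ^ (n + 1)) ⁻¹' J := by
    ext f
    constructor
    · rintro ⟨hf, m, -, hm⟩
      exact ⟨hf, BallAlgebra.pow_mem_of_mem_radical hJ hJcl hJhom hN (x := ⟨f, hf⟩) ⟨m, hm⟩⟩
    · rintro ⟨hf, hfN⟩
      exact ⟨hf, n + 1, n.succ_pos, hfN⟩
  rw [hset]
  exact isClosed_closure.inter (hJcl.preimage (continuous_pow _))
end
end

section
/- Let I ⊆ ℂ[z₁,…,z_d] be a radical homogeneous ideal, let B be the ball algebra on the closed unit ball of ℂ^d, and let J be the closure in B of the set of restrictions ι(p) of polynomials p ∈ I. Then J is a radical ideal of B: if f ∈ B and f^n ∈ J for some n ≥ 1, then f ∈ J. -/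
open MvPolynomial Metric

noncomputable section

/-- An ideal of polynomials is homogeneous if it contains the homogeneous
components of each of its elements. -/
def IsHomogeneousIdeal {d : ℕ} (I : Ideal (MvPolynomial (Fin d) ℂ)) : Prop :=
  ∀ p ∈ I, ∀ n : ℕ, homogeneousComponent n p ∈ I

/-
Since `f ^ n ∈ J`, `f` vanishes on the cone `Z = Z(I) ∩ B̄`. Averaging over `N`-th roots of unity
gives the Cauchy-type bound `|p_k(z)| ≤ sup_{|t| = 1} |p(t z)|` for the degree-`k` component of a
polynomial, so the degree-`k` components of polynomials converging to `f` converge to homogeneous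
polynomials `q_k`; since `Z` is stable under the circle action and `f = 0` on `Z`, each `q_k`
vanishes on `Z`, hence on `Z(I)` by homogeneity, and lies in `√I = I` by the Nullstellensatz.
For `|t| < 1` and a polynomial `p` with `‖p - f‖ = ε`, the dilation `f(t ·)` lies within
`ε + ε / (1 - |t|)` of `∑_{k ≤ deg p} t^k q_k ∈ I`; finally `f(t ·) → f` as `t → 1` by uniform
continuity.
-/

namespace MvPolynomial

variable {σ : Type*}

theorem IsHomogeneous.eval_smul {R : Type*} [CommSemiring R] {φ : MvPolynomial σ R} {n : ℕ}
    (hφ : φ.IsHomogeneous n) (c : R) (x : σ → R) : eval (c • x) φ = c ^ n * eval x φ := by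
  rw [eval_eq, eval_eq, Finset.mul_sum]
  refine Finset.sum_congr rfl fun s hs => ?_
  have hdeg : ∑ i ∈ s.support, s i = n := by
    simpa [Finsupp.weight_apply, Finsupp.sum] using hφ (mem_support_iff.mp hs)
  simp only [Pi.smul_apply, smul_eq_mul, mul_pow, Finset.prod_mul_distrib,
    Finset.prod_pow_eq_pow_sum, hdeg]
  ring

theorem eval_smul_eq_sum_homogeneousComponent {R : Type*} [CommSemiring R] (c : R) (x : σ → R)
    (p : MvPolynomial σ R) {N : ℕ} (hN : p.totalDegree < N) :
    eval (c • x) p = ∑ m ∈ Finset.range N, c ^ m * eval x (homogeneousComponent m p) := by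
  conv_lhs => rw [← sum_homogeneousComponent p]
  rw [map_sum, Finset.sum_subset (Finset.range_subset_range.mpr hN) fun m _ hm => by
    rw [homogeneousComponent_eq_zero _ _ (by simpa using hm), map_zero]]
  exact Finset.sum_congr rfl fun m _ =>
    (homogeneousComponent_isHomogeneous m p).eval_smul c x

end MvPolynomial

theorem IsPrimitiveRoot.geom_sum_pow_div_pow {K : Type*} [Field K] {ω : K} {N m k : ℕ}
    (hω : IsPrimitiveRoot ω N) (hm : m < N) (hk : k < N) :
    ∑ j ∈ Finset.range N, (ω ^ m / ω ^ k) ^ j = if m = k then (N : K) else 0 := by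
  have hω0 : ω ≠ 0 := hω.ne_zero (by omega)
  split_ifs with hmk
  · simp [hmk, div_self (pow_ne_zero k hω0)]
  have hr : ω ^ m / ω ^ k ≠ 1 := fun h =>
    hmk (hω.pow_inj hm hk (div_eq_one_iff_eq (pow_ne_zero k hω0) |>.mp h))
  have hrN : (ω ^ m / ω ^ k) ^ N = 1 := by
    rw [div_pow, ← pow_mul, ← pow_mul, mul_comm m, mul_comm k, pow_mul, pow_mul,
      hω.pow_eq_one, one_pow, one_pow, div_one]
  rw [geom_sum_eq hr, hrN, sub_self, zero_div]

theorem IsPrimitiveRoot.sum_eval_pow_smul_div {K σ : Type*} [Field K] {ω : K} {N k : ℕ}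
    (hω : IsPrimitiveRoot ω N) (hk : k < N) (p : MvPolynomial σ K) (hp : p.totalDegree < N)
    (x : σ → K) :
    ∑ j ∈ Finset.range N, eval (ω ^ j • x) p / (ω ^ j) ^ k =
      N * eval x (homogeneousComponent k p) := by
  calc ∑ j ∈ Finset.range N, eval (ω ^ j • x) p / (ω ^ j) ^ k
      = ∑ j ∈ Finset.range N, ∑ m ∈ Finset.range N,
          (ω ^ m / ω ^ k) ^ j * eval x (homogeneousComponent m p) := by
        refine Finset.sum_congr rfl fun j _ => ?_
        rw [eval_smul_eq_sum_homogeneousComponent _ _ _ hp, Finset.sum_div]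
        exact Finset.sum_congr rfl fun m _ => by ring
    _ = ∑ m ∈ Finset.range N, (∑ j ∈ Finset.range N, (ω ^ m / ω ^ k) ^ j) *
          eval x (homogeneousComponent m p) := by
        rw [Finset.sum_comm]
        simp_rw [Finset.sum_mul]
    _ = N * eval x (homogeneousComponent k p) := by
        rw [Finset.sum_congr rfl fun m hm => by
          rw [hω.geom_sum_pow_div_pow (Finset.mem_range.mp hm) hk]]
        simp [ite_mul, hk]

namespace MvPolynomial

theorem norm_eval_homogeneousComponent_le {σ : Type*} (p : MvPolynomial σ ℂ) (k : ℕ)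
    (x : σ → ℂ) {M : ℝ} (hM : ∀ t : ℂ, ‖t‖ = 1 → ‖eval (t • x) p‖ ≤ M) :
    ‖eval x (homogeneousComponent k p)‖ ≤ M := by
  set N := max p.totalDegree k + 1
  have hN : N ≠ 0 := by simp [N]
  obtain ⟨ω, hω⟩ : ∃ ω : ℂ, IsPrimitiveRoot ω N := ⟨_, Complex.isPrimitiveRoot_exp N hN⟩
  have hω1 : ∀ j : ℕ, ‖ω ^ j‖ = 1 := fun j => by rw [norm_pow, hω.norm'_eq_one hN, one_pow]
  have hNM : (N : ℝ) * ‖eval x (homogeneousComponent k p)‖ ≤ N * M := calc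
    (N : ℝ) * ‖eval x (homogeneousComponent k p)‖
        = ‖∑ j ∈ Finset.range N, eval (ω ^ j • x) p / (ω ^ j) ^ k‖ := by
          rw [hω.sum_eval_pow_smul_div (by omega) p (by omega) x, norm_mul, Complex.norm_natCast]
    _ ≤ ∑ j ∈ Finset.range N, ‖eval (ω ^ j • x) p / (ω ^ j) ^ k‖ := norm_sum_le _ _
    _ ≤ ∑ _j ∈ Finset.range N, M := Finset.sum_le_sum fun j _ => by
          rw [norm_div, norm_pow, hω1, one_pow, div_one]
          exact hM _ (hω1 j)
    _ = N * M := by simp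
  exact le_of_mul_le_mul_left hNM (by positivity)

theorem smul_mem_zeroLocus {d : ℕ} {I : Ideal (MvPolynomial (Fin d) ℂ)}
    (hI : IsHomogeneousIdeal I) {x : Fin d → ℂ} (hx : x ∈ zeroLocus ℂ I) (c : ℂ) :
    c • x ∈ zeroLocus ℂ I := fun p hp => by
  change eval (c • x) p = 0
  rw [eval_smul_eq_sum_homogeneousComponent c x p (lt_add_one _)]
  exact Finset.sum_eq_zero fun m _ => by rw [show eval x _ = 0 from hx _ (hI p hp m), mul_zero]

instance finiteDimensional_homogeneousSubmodule {σ K : Type*} [Finite σ] [Field K] (k : ℕ) :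
    FiniteDimensional K (homogeneousSubmodule σ K k) :=
  Submodule.finiteDimensional_of_le (S₂ := restrictTotalDegree σ K k) fun _ hp =>
    (mem_restrictTotalDegree _ _ _).mpr ((mem_homogeneousSubmodule _ _).mp hp).totalDegree_le

end MvPolynomial

section BallAlgebra

variable {d : ℕ}

def coords (z : CBall d) : Fin d → ℂ := WithLp.ofLp (z : Cd d)

theorem polyMap_apply (p : MvPolynomial (Fin d) ℂ) (z : CBall d) :
    polyMap d p z = eval (coords z) p := by
  induction p using MvPolynomial.induction_on with
  | C a => simp [polyMap]
  | add p q hp hq => simp [hp, hq]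
  | mul_X p i hp =>
    rw [map_mul, ContinuousMap.mul_apply, hp]
    simp [polyMap, coordFn, coords]

theorem coords_dilatePt (t : ℂ) (ht : ‖t‖ ≤ 1) (z : CBall d) :
    coords (dilatePt d t ht z) = t • coords z := rfl

theorem dilateFn_sub (t : ℂ) (ht : ‖t‖ ≤ 1) (f g : C(CBall d, ℂ)) :
    dilateFn d t ht (f - g) = dilateFn d t ht f - dilateFn d t ht g := rfl

theorem norm_dilateFn_le (t : ℂ) (ht : ‖t‖ ≤ 1) (f : C(CBall d, ℂ)) :
    ‖dilateFn d t ht f‖ ≤ ‖f‖ :=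
  (ContinuousMap.norm_le _ (norm_nonneg _)).2 fun _ => f.norm_coe_le_norm _

theorem dilateFn_polyMap (t : ℂ) (ht : ‖t‖ ≤ 1) (p : MvPolynomial (Fin d) ℂ) {N : ℕ}
    (hN : p.totalDegree < N) :
    dilateFn d t ht (polyMap d p) =
      ∑ m ∈ Finset.range N, t ^ m • polyMap d (homogeneousComponent m p) := by
  ext z
  simp only [dilateFn, ContinuousMap.comp_apply, ContinuousMap.coe_sum, Finset.sum_apply,
    ContinuousMap.coe_smul, Pi.smul_apply, smul_eq_mul, polyMap_apply, coords_dilatePt]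
  exact eval_smul_eq_sum_homogeneousComponent t (coords z) p hN

theorem exists_norm_polyMap_sub_lt {f : C(CBall d, ℂ)} (hf : f ∈ ballAlg d) {ε : ℝ}
    (hε : 0 < ε) : ∃ p, ‖polyMap d p - f‖ < ε := by
  obtain ⟨_, ⟨p, rfl⟩, h⟩ := Metric.mem_closure_iff.1 hf ε hε
  exact ⟨p, by rwa [dist_comm, dist_eq_norm] at h⟩

theorem norm_polyMap_homogeneousComponent_apply_le (p : MvPolynomial (Fin d) ℂ) (k : ℕ)
    {f : C(CBall d, ℂ)} {z : CBall d}
    (hz : ∀ (t : ℂ) (ht : ‖t‖ ≤ 1), f (dilatePt d t ht z) = 0) :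
    ‖polyMap d (homogeneousComponent k p) z‖ ≤ ‖polyMap d p - f‖ := by
  rw [polyMap_apply]
  refine norm_eval_homogeneousComponent_le p k _ fun t ht => ?_
  calc ‖eval (t • coords z) p‖ = ‖(polyMap d p - f) (dilatePt d t ht.le z)‖ := by
        rw [ContinuousMap.sub_apply, hz, sub_zero, polyMap_apply, coords_dilatePt]
    _ ≤ ‖polyMap d p - f‖ := ContinuousMap.norm_coe_le_norm _ _

theorem norm_polyMap_homogeneousComponent_le (p : MvPolynomial (Fin d) ℂ) (k : ℕ) :
    ‖polyMap d (homogeneousComponent k p)‖ ≤ ‖polyMap d p‖ :=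
  (ContinuousMap.norm_le _ (norm_nonneg _)).2 fun _ => by
    simpa using norm_polyMap_homogeneousComponent_apply_le p k (f := 0) fun _ _ => rfl

theorem isClosed_polyMap_image_homogeneous (k : ℕ) :
    IsClosed (polyMap d '' {q | q.IsHomogeneous k}) :=
  (Submodule.map (polyMap d).toLinearMap
    (homogeneousSubmodule (Fin d) ℂ k)).closed_of_finiteDimensional

/-- For `f ∈ ballAlg d` this pins down `polyMap d q`: it is the uniform limit of the degree-`k`
components of any polynomials converging to `f`. -/
def IsHomogComponent (k : ℕ) (f : C(CBall d, ℂ)) (q : MvPolynomial (Fin d) ℂ) : Prop :=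
  q.IsHomogeneous k ∧
    ∀ p, ‖polyMap d (homogeneousComponent k p) - polyMap d q‖ ≤ ‖polyMap d p - f‖

theorem exists_isHomogComponent {f : C(CBall d, ℂ)} (hf : f ∈ ballAlg d) (k : ℕ) :
    ∃ q, IsHomogComponent k f q := by
  obtain ⟨v, hv, hlim⟩ := mem_closure_iff_seq_limit.1 hf
  choose p hp using hv
  have hcomp : ∀ a b,
      ‖polyMap d (homogeneousComponent k a) - polyMap d (homogeneousComponent k b)‖ ≤
        ‖polyMap d a - polyMap d b‖ := fun a b => by
    simpa only [map_sub] using norm_polyMap_homogeneousComponent_le (a - b) k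
  have hcauchy : CauchySeq fun j => polyMap d (homogeneousComponent k (p j)) :=
    Metric.cauchySeq_iff.2 fun ε hε => (Metric.cauchySeq_iff.1 hlim.cauchySeq ε hε).imp
      fun N hN a ha b hb => by
        have hab := hN a ha b hb
        rw [dist_eq_norm, ← hp, ← hp] at hab
        exact (dist_eq_norm _ _).trans_le (hcomp _ _) |>.trans_lt hab
  obtain ⟨g, hg⟩ := cauchySeq_tendsto_of_complete hcauchy
  obtain ⟨q, hq, rfl⟩ := (isClosed_polyMap_image_homogeneous k).mem_of_tendsto hg
    (Filter.Eventually.of_forall fun j => ⟨_, homogeneousComponent_isHomogeneous k (p j), rfl⟩)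
  refine ⟨q, hq, fun p' => le_of_tendsto_of_tendsto' ((tendsto_const_nhds.sub hg).norm)
    ((tendsto_const_nhds.sub hlim).norm) fun j => ?_⟩
  simpa only [hp] using hcomp p' (p j)

theorem IsHomogComponent.polyMap_apply_eq_zero {k : ℕ} {f : C(CBall d, ℂ)}
    {q : MvPolynomial (Fin d) ℂ} (hq : IsHomogComponent k f q) (hf : f ∈ ballAlg d)
    {z : CBall d} (hz : ∀ (t : ℂ) (ht : ‖t‖ ≤ 1), f (dilatePt d t ht z) = 0) :
    polyMap d q z = 0 := by
  by_contra h
  obtain ⟨p, hp⟩ := exists_norm_polyMap_sub_lt hf (half_pos (norm_pos_iff.2 h))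
  refine lt_irrefl ‖polyMap d q z‖ ?_
  calc ‖polyMap d q z‖
      ≤ ‖polyMap d (homogeneousComponent k p) z‖ +
          ‖polyMap d q z - polyMap d (homogeneousComponent k p) z‖ :=
        norm_le_norm_add_norm_sub' _ _
    _ ≤ ‖polyMap d p - f‖ + ‖polyMap d (homogeneousComponent k p) - polyMap d q‖ := by
        gcongr
        · exact norm_polyMap_homogeneousComponent_apply_le p k hz
        · rw [norm_sub_rev, ← ContinuousMap.sub_apply]
          exact ContinuousMap.norm_coe_le_norm _ _
    _ < ‖polyMap d q z‖ := by linarith [hq.2 p]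

theorem apply_eq_zero_of_mem_closure_polyMap_image {I : Ideal (MvPolynomial (Fin d) ℂ)}
    {g : C(CBall d, ℂ)} (hg : g ∈ closure (polyMap d '' (I : Set (MvPolynomial (Fin d) ℂ))))
    {z : CBall d} (hz : coords z ∈ zeroLocus ℂ I) : g z = 0 := by
  refine closure_minimal ?_ (isClosed_eq (continuous_eval_const z) continuous_const) hg
  rintro _ ⟨p, hp, rfl⟩
  change polyMap d p z = 0
  rw [polyMap_apply]
  exact hz p hp

theorem mem_of_isHomogeneous_of_polyMap_apply_eq_zero {I : Ideal (MvPolynomial (Fin d) ℂ)}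
    (hrad : I.IsRadical) (hhom : IsHomogeneousIdeal I) {q : MvPolynomial (Fin d) ℂ} {k : ℕ}
    (hq : q.IsHomogeneous k)
    (h : ∀ z : CBall d, coords z ∈ zeroLocus ℂ I → polyMap d q z = 0) :
    q ∈ I := by
  rw [← hrad.radical, ← vanishingIdeal_zeroLocus_eq_radical (K := ℂ), mem_vanishingIdeal_iff]
  intro x hx
  set c : ℝ := (1 + ‖WithLp.toLp 2 x‖)⁻¹
  have hc : 0 < c := by positivity
  have hcx : (c : ℂ) • WithLp.toLp 2 x ∈ CBall d := by
    rw [mem_closedBall_zero_iff, norm_smul, Complex.norm_real, Real.norm_of_nonneg hc.le,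
      inv_mul_le_iff₀ (by positivity), mul_one]
    exact le_add_of_nonneg_left zero_le_one
  have hz := h ⟨_, hcx⟩ (smul_mem_zeroLocus hhom hx c)
  rw [polyMap_apply] at hz
  change eval ((c : ℂ) • x) q = 0 at hz
  rw [hq.eval_smul] at hz
  exact (mul_eq_zero.1 hz).resolve_left (pow_ne_zero _ (by exact_mod_cast hc.ne'))

theorem dilateFn_mem_closure_polyMap_image {I : Ideal (MvPolynomial (Fin d) ℂ)}
    {f : C(CBall d, ℂ)} (hf : f ∈ ballAlg d) {q : ℕ → MvPolynomial (Fin d) ℂ}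
    (hq : ∀ k, IsHomogComponent k f (q k)) (hqI : ∀ k, q k ∈ I) {t : ℂ} (ht : ‖t‖ < 1) :
    dilateFn d t ht.le f ∈ closure (polyMap d '' (I : Set (MvPolynomial (Fin d) ℂ))) := by
  rw [Metric.mem_closure_iff]
  intro ε hε
  have hs : 0 < 1 - ‖t‖ := sub_pos.2 ht
  obtain ⟨p, hp⟩ := exists_norm_polyMap_sub_lt hf (by positivity : 0 < ε * (1 - ‖t‖) / 2)
  set δ := ‖polyMap d p - f‖
  set N := p.totalDegree + 1
  refine ⟨_, ⟨∑ k ∈ Finset.range N, t ^ k • q k,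
    I.sum_mem fun k _ => Submodule.smul_of_tower_mem _ _ (hqI k), rfl⟩, ?_⟩
  have hpart :
      dilateFn d t ht.le (polyMap d p) - polyMap d (∑ k ∈ Finset.range N, t ^ k • q k) =
        ∑ k ∈ Finset.range N,
          t ^ k • (polyMap d (homogeneousComponent k p) - polyMap d (q k)) := by
    rw [dilateFn_polyMap t ht.le p (N := N) (by omega), map_sum, ← Finset.sum_sub_distrib]
    simp only [map_smul, smul_sub]
  have hgeom : ∑ k ∈ Finset.range N, ‖t‖ ^ k ≤ 1 / (1 - ‖t‖) := by
    have h := geom_sum_Ico_le_of_lt_one (norm_nonneg t) ht (m := 0) (n := N)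
    rwa [← Finset.range_eq_Ico, pow_zero] at h
  calc dist (dilateFn d t ht.le f) (polyMap d (∑ k ∈ Finset.range N, t ^ k • q k))
      ≤ ‖dilateFn d t ht.le (f - polyMap d p)‖ + ‖dilateFn d t ht.le (polyMap d p) -
          polyMap d (∑ k ∈ Finset.range N, t ^ k • q k)‖ := by
        rw [dist_eq_norm, dilateFn_sub]
        exact norm_sub_le_norm_sub_add_norm_sub _ _ _
    _ ≤ δ + ∑ k ∈ Finset.range N, ‖t‖ ^ k * δ := by
        gcongr
        · exact (norm_dilateFn_le _ _ _).trans (norm_sub_rev _ _).le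
        · rw [hpart]
          refine (norm_sum_le _ _).trans (Finset.sum_le_sum fun k _ => ?_)
          rw [norm_smul, norm_pow]
          exact mul_le_mul_of_nonneg_left ((hq k).2 p) (by positivity)
    _ ≤ δ + δ / (1 - ‖t‖) := by
        rw [← Finset.sum_mul, div_eq_mul_one_div δ, mul_comm δ]
        gcongr
    _ < ε := by
        have h1 : δ / (1 - ‖t‖) < ε / 2 := by rw [div_lt_iff₀ hs]; linarith
        have h2 : δ < ε / 2 := by nlinarith [norm_nonneg t]
        linarith

theorem exists_dist_dilateFn_lt (f : C(CBall d, ℂ)) {ε : ℝ} (hε : 0 < ε) :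
    ∃ (t : ℂ) (ht : ‖t‖ < 1), dist (dilateFn d t ht.le f) f < ε := by
  obtain ⟨δ, hδ, hf⟩ := Metric.uniformContinuous_iff.1
    (CompactSpace.uniformContinuous_of_continuous f.continuous) (ε / 2) (half_pos hε)
  set s : ℝ := min (δ / 2) 1
  have hs : 0 < s := by positivity
  have hs1 : s ≤ 1 := min_le_right _ _
  have hnorm : ‖((1 - s : ℝ) : ℂ)‖ = 1 - s := by
    rw [Complex.norm_real, Real.norm_of_nonneg (by linarith)]
  refine ⟨((1 - s : ℝ) : ℂ), by linarith, lt_of_le_of_lt ((ContinuousMap.dist_le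
    (half_pos hε).le).2 fun z => (hf ?_).le) (half_lt_self hε)⟩
  have hz : ‖(z : Cd d)‖ ≤ 1 := mem_closedBall_zero_iff.1 z.2
  have hmove : ((1 - s : ℝ) : ℂ) • (z : Cd d) - z = ((-s : ℝ) : ℂ) • (z : Cd d) := by
    push_cast
    rw [sub_smul, one_smul, neg_smul]
    abel
  calc dist (dilatePt d _ _ z) z = s * ‖(z : Cd d)‖ := by
        rw [Subtype.dist_eq, dist_eq_norm]
        change ‖((1 - s : ℝ) : ℂ) • (z : Cd d) - z‖ = _
        rw [hmove, norm_smul, Complex.norm_real, Real.norm_eq_abs, abs_neg, abs_of_pos hs]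
    _ ≤ s := mul_le_of_le_one_right hs.le hz
    _ < δ := (min_le_left _ _).trans_lt (half_lt_self hδ)

end BallAlgebra

/-- If `I` is a radical homogeneous ideal of ℂ[z₁,…,z_d] and `J`
is the closure in the ball algebra `B` of the restrictions of the members of `I`,
then `J` is radical: any `f ∈ B` with `f^n ∈ J` for some `n ≥ 1` lies in `J`. -/
theorem stmt13 (d : ℕ) (I : Ideal (MvPolynomial (Fin d) ℂ))
    (hrad : I.IsRadical) (hhom : IsHomogeneousIdeal I) :
    ∀ f ∈ ballAlg d,
      (∃ n : ℕ, 1 ≤ n ∧ f ^ n ∈ closure (polyMap d '' (I : Set (MvPolynomial (Fin d) ℂ)))) →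
        f ∈ closure (polyMap d '' (I : Set (MvPolynomial (Fin d) ℂ))) := by
  rintro f hf ⟨n, hn, hfn⟩
  have hf0 : ∀ z : CBall d, coords z ∈ zeroLocus ℂ I → f z = 0 := fun z hz =>
    pow_eq_zero_iff (by omega) |>.1 (apply_eq_zero_of_mem_closure_polyMap_image hfn hz)
  choose q hq using exists_isHomogComponent hf
  have hqI : ∀ k, q k ∈ I := fun k =>
    mem_of_isHomogeneous_of_polyMap_apply_eq_zero hrad hhom (hq k).1 fun z hz =>
      (hq k).polyMap_apply_eq_zero hf fun t ht => hf0 _ (smul_mem_zeroLocus hhom hz t)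
  rw [← closure_closure, Metric.mem_closure_iff]
  intro ε hε
  obtain ⟨t, ht, hdist⟩ := exists_dist_dilateFn_lt f hε
  exact ⟨_, dilateFn_mem_closure_polyMap_image hf hq hqI ht, by rwa [dist_comm]⟩
end
end
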